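/- arXiv:1810.11180 — 7 statements merged into one kernel-verified Lean document; each statement's English description precedes it below -/
import Mathlib

section
/- If Z is a sub-gaussian random variable in a real separable Hilbert space H with respect to Γ, meaning E[exp⟨z, Z−μ⟩] ≤ exp(α²⟨Γz, z⟩/2) for all z ∈ H where α = ‖Z‖_{ψ₂,Γ}, then the covariance operator Σ of Z satisfies Σ ⪯ 4α²Γ, i.e., 4α²Γ − Σ is positive semidefinite. -/
/-!
In a fixed direction `z`, the mgf bound says that `X = ⟪z, Z - μ⟫` is a real sub-Gaussian
variable with variance proxy `c = α² ⟪Γ z, z⟫`. Integrating `2 cosh (t X) ≥ 2 + t² X²` against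
the mgf bound at `±t` gives `t² E[X²] ≤ 2 (exp (c t² / 2) - 1) ≤ c t² exp (c t² / 2)`, and
letting `t → 0` yields `⟪Cov z, z⟫ = E[X²] ≤ c`, which is even better than the factor `4`.
-/

open MeasureTheory ProbabilityTheory Filter Topology
open scoped RealInnerProductSpace NNReal

namespace Real

lemma one_add_sq_div_two_le_cosh (x : ℝ) : 1 + x ^ 2 / 2 ≤ cosh x := by
  have h := sum_le_hasSum (Finset.range 2)
    (fun n _ ↦ by have := (even_two_mul n).pow_nonneg x; positivity) (hasSum_cosh x)
  norm_num [Finset.sum_range_succ] at h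
  linarith

lemma two_add_sq_le_exp_add_exp_neg (x : ℝ) : 2 + x ^ 2 ≤ exp x + exp (-x) := by
  linarith [one_add_sq_div_two_le_cosh x, cosh_eq x]

lemma exp_sub_one_le_mul_exp (x : ℝ) : exp x - 1 ≤ x * exp x := by
  have h := mul_le_mul_of_nonneg_right (add_one_le_exp (-x)) (exp_pos x).le
  rw [← exp_add, neg_add_cancel, exp_zero] at h
  linarith

end Real

namespace ProbabilityTheory.HasSubgaussianMGF

variable {Ω : Type*} {mΩ : MeasurableSpace Ω} {μ : Measure Ω} [IsProbabilityMeasure μ]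
  {X : Ω → ℝ} {c : ℝ≥0}

lemma sq_mul_integral_sq_le (h : HasSubgaussianMGF X c μ) (t : ℝ) :
    t ^ 2 * μ[X ^ 2] ≤ 2 * (Real.exp (c * t ^ 2 / 2) - 1) := by
  have hsq : Integrable (X ^ 2) μ := (h.memLp 2).integrable_sq
  have hexp (s : ℝ) : Integrable (fun ω ↦ Real.exp (s * X ω)) μ := h.integrable_exp_mul s
  have hcosh : ∫ ω, (2 + t ^ 2 * (X ^ 2) ω) ∂μ ≤
      ∫ ω, (Real.exp (t * X ω) + Real.exp (-t * X ω)) ∂μ := by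
    refine integral_mono ((integrable_const 2).add (hsq.const_mul _)) ((hexp t).add (hexp (-t)))
      fun ω ↦ ?_
    simpa [mul_pow, neg_mul] using Real.two_add_sq_le_exp_add_exp_neg (t * X ω)
  rw [integral_add (integrable_const 2) (hsq.const_mul _), integral_add (hexp t) (hexp (-t)),
    integral_const_mul] at hcosh
  have hmgf_t := h.mgf_le t
  have hmgf_neg_t := h.mgf_le (-t)
  simp only [mgf, neg_sq] at hmgf_t hmgf_neg_t
  simp only [integral_const, probReal_univ, smul_eq_mul, one_mul] at hcosh
  linarith

lemma integral_sq_le (h : HasSubgaussianMGF X c μ) : μ[X ^ 2] ≤ (c : ℝ) := by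
  have hbound : ∀ t ≠ (0 : ℝ), μ[X ^ 2] ≤ c * Real.exp (c * t ^ 2 / 2) := by
    intro t ht
    have ht2 : 0 < t ^ 2 := by positivity
    have hexp_sub_one := Real.exp_sub_one_le_mul_exp (c * t ^ 2 / 2)
    refine le_of_mul_le_mul_left ?_ ht2
    nlinarith [h.sq_mul_integral_sq_le t]
  have hlim : Tendsto (fun t : ℝ ↦ (c : ℝ) * Real.exp (c * t ^ 2 / 2)) (𝓝[≠] 0) (𝓝 c) := by
    have hcont : Continuous fun t : ℝ ↦ (c : ℝ) * Real.exp (c * t ^ 2 / 2) := by fun_prop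
    simpa using (hcont.tendsto 0).mono_left nhdsWithin_le_nhds
  exact ge_of_tendsto hlim (eventually_nhdsWithin_of_forall fun t ht ↦ hbound t ht)

end ProbabilityTheory.HasSubgaussianMGF

lemma hasSubgaussianMGF_inner_of_integral_exp_inner_le
    {H : Type*} [NormedAddCommGroup H] [InnerProductSpace ℝ H]
    {Ω : Type*} [MeasurableSpace Ω] {P : Measure Ω} (Γ : H →L[ℝ] H)
    (hΓpos : ∀ z : H, 0 ≤ ⟪Γ z, z⟫) (Y : Ω → H) (α : ℝ)
    (hmgf : ∀ z : H, Integrable (fun ω ↦ Real.exp ⟪z, Y ω⟫) P ∧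
      ∫ ω, Real.exp ⟪z, Y ω⟫ ∂P ≤ Real.exp (α ^ 2 * ⟪Γ z, z⟫ / 2)) (z : H) :
    HasSubgaussianMGF (fun ω ↦ ⟪z, Y ω⟫)
      ⟨α ^ 2 * ⟪Γ z, z⟫, mul_nonneg (sq_nonneg α) (hΓpos z)⟩ P := by
  have hscale (t : ℝ) (ω : Ω) : ⟪t • z, Y ω⟫ = t * ⟪z, Y ω⟫ := real_inner_smul_left _ _ _
  have hquad (t : ℝ) : α ^ 2 * ⟪Γ (t • z), t • z⟫ = α ^ 2 * ⟪Γ z, z⟫ * t ^ 2 := by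
    rw [map_smul, real_inner_smul_left, real_inner_smul_right]; ring
  refine ⟨fun t ↦ ?_, fun t ↦ ?_⟩
  · simpa only [hscale] using (hmgf (t • z)).1
  · change _ ≤ Real.exp (α ^ 2 * ⟪Γ z, z⟫ * t ^ 2 / 2)
    simpa only [mgf, hscale, hquad] using (hmgf (t • z)).2

theorem stmt_1_general
    {H : Type*} [NormedAddCommGroup H] [InnerProductSpace ℝ H]
    {Ω : Type*} [MeasurableSpace Ω] {P : Measure Ω} [IsProbabilityMeasure P]
    (Γ Cov : H →L[ℝ] H)
    (hΓpos : ∀ z : H, 0 ≤ ⟪Γ z, z⟫)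
    (Z : Ω → H)
    (μ : H)
    (α : ℝ)
    (hmgf : ∀ z : H, Integrable (fun ω => Real.exp ⟪z, Z ω - μ⟫) P ∧
      ∫ ω, Real.exp ⟪z, Z ω - μ⟫ ∂P ≤ Real.exp (α ^ 2 * ⟪Γ z, z⟫ / 2))
    (hCov : ∀ z w : H, ⟪Cov z, w⟫ = ∫ ω, ⟪Z ω - μ, z⟫ * ⟪Z ω - μ, w⟫ ∂P) :
    ∀ z : H, 0 ≤ ⟪((4 * α ^ 2) • Γ - Cov) z, z⟫ := by
  intro z
  have hsecond := (hasSubgaussianMGF_inner_of_integral_exp_inner_le Γ hΓpos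
    (fun ω ↦ Z ω - μ) α hmgf z).integral_sq_le
  have hvar : ⟪Cov z, z⟫ = ∫ ω, ⟪z, Z ω - μ⟫ ^ 2 ∂P := by
    simp only [hCov, real_inner_comm z, sq]
  simp only [Pi.pow_apply, ← hvar] at hsecond
  change _ ≤ α ^ 2 * ⟪Γ z, z⟫ at hsecond
  rw [sub_apply, inner_sub_left, smul_apply, real_inner_smul_left]
  nlinarith [hΓpos z, sq_nonneg α]

/-- If `Z` is sub-gaussian in a real separable Hilbert space `H` with respect to `Γ`,
i.e. `E[exp⟪z, Z − μ⟫] ≤ exp(α² ⟪Γ z, z⟫ / 2)` for all `z ∈ H` where `α = ‖Z‖_{ψ₂,Γ}`,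
then the covariance operator `Cov` of `Z` satisfies `Cov ⪯ 4 α² Γ`, i.e.
`4 α² Γ − Cov` is positive semidefinite. -/
theorem stmt_1
    {H : Type*} [NormedAddCommGroup H] [InnerProductSpace ℝ H] [CompleteSpace H]
    [TopologicalSpace.SeparableSpace H] [MeasurableSpace H] [BorelSpace H]
    {Ω : Type*} [MeasurableSpace Ω] {P : Measure Ω} [IsProbabilityMeasure P]
    (Γ Cov : H →L[ℝ] H)
    (hΓsa : IsSelfAdjoint Γ) (hΓpos : ∀ z : H, 0 ≤ ⟪Γ z, z⟫)
    {ι : Type*} (b : HilbertBasis ι ℝ H)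
    (hΓtr : Summable (fun i => ⟪Γ (b i), b i⟫))
    (Z : Ω → H) (hZmeas : AEMeasurable Z P) (hZint : Integrable Z P)
    (μ : H) (hμ : ∫ ω, Z ω ∂P = μ)
    (α : ℝ) (hα : 0 ≤ α)
    (hmgf : ∀ z : H, Integrable (fun ω => Real.exp ⟪z, Z ω - μ⟫) P ∧
      ∫ ω, Real.exp ⟪z, Z ω - μ⟫ ∂P ≤ Real.exp (α ^ 2 * ⟪Γ z, z⟫ / 2))
    (hCov : ∀ z w : H, ⟪Cov z, w⟫ = ∫ ω, ⟪Z ω - μ, z⟫ * ⟪Z ω - μ, w⟫ ∂P) :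
    ∀ z : H, 0 ≤ ⟪((4 * α ^ 2) • Γ - Cov) z, z⟫ :=
  stmt_1_general Γ Cov hΓpos Z μ α hmgf hCov
end

section
/- Let X be a mean-zero random variable in ℝⁿ with E[exp(zᵀX)] ≤ exp(zᵀΓz/2) for all z ∈ ℝⁿ, where Γ is an n×n positive semidefinite matrix, and let Z ~ N(0,Γ). Then for all 0 ≤ t < ‖Γ‖_op⁻¹, E[exp(t‖X‖²/2)] ≤ E[exp(t‖Z‖²/2)]. -/
open MeasureTheory
open scoped RealInnerProductSpace

/-!
For a standard Gaussian vector `W`, `exp (t ‖y‖² / 2) = E[exp ⟪√t • W, y⟫]`.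
By Tonelli, `E[exp (t ‖X‖² / 2)]` is therefore the average over `W` of the moment generating
function of `X` at `√t • W`, which is at most `exp (t ⟪ΓW, W⟫ / 2)`; for `Z` the same computation
gives equality. The common bound `E[exp (t ⟪ΓW, W⟫ / 2)] ≤ E[exp (t ‖Γ‖ ‖W‖² / 2)]` is finite
because `t ‖Γ‖ < 1`.
-/

open ProbabilityTheory Real
open scoped ENNReal

lemma integrable_exp_mul_sq_gaussianReal {c : ℝ} (hc : c < 1) :
    Integrable (fun x ↦ exp (c * x ^ 2 / 2)) (gaussianReal 0 1) := by
  rw [gaussianReal_of_var_ne_zero 0 one_ne_zero, integrable_withDensity_iff_integrable_smul'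
    (measurable_gaussianPDF 0 1) (ae_of_all _ fun _ ↦ gaussianPDF_lt_top)]
  have h : Integrable (fun x : ℝ ↦ (√(2 * π))⁻¹ * exp (-((1 - c) / 2) * x ^ 2)) :=
    (integrable_exp_neg_mul_sq (by linarith)).const_mul _
  refine h.congr (ae_of_all _ fun x ↦ ?_)
  simp only [toReal_gaussianPDF, gaussianPDFReal, smul_eq_mul, NNReal.coe_one, mul_one, sub_zero,
    mul_assoc, ← exp_add]
  ring_nf

lemma ContinuousLinearMap.real_inner_map_self_le {E : Type*} [NormedAddCommGroup E]
    [InnerProductSpace ℝ E] (G : E →L[ℝ] E) (x : E) :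
    ⟪G x, x⟫ ≤ ‖G‖ * ‖x‖ ^ 2 :=
  calc ⟪G x, x⟫ ≤ ‖G x‖ * ‖x‖ := real_inner_le_norm _ _
    _ ≤ ‖G‖ * ‖x‖ * ‖x‖ := by gcongr; exact G.le_opNorm x
    _ = ‖G‖ * ‖x‖ ^ 2 := by ring

lemma integrable_and_integral_le_of_lintegral_ofReal_le {α β : Type*} [MeasurableSpace α]
    [MeasurableSpace β] {μ : Measure α} {ν : Measure β} {f : α → ℝ} {g : β → ℝ}
    (hf : AEStronglyMeasurable f μ) (hf₀ : 0 ≤ᵐ[μ] f) (hg : AEStronglyMeasurable g ν)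
    (hg₀ : 0 ≤ᵐ[ν] g) (hle : ∫⁻ x, ENNReal.ofReal (f x) ∂μ ≤ ∫⁻ y, ENNReal.ofReal (g y) ∂ν)
    (hg_fin : ∫⁻ y, ENNReal.ofReal (g y) ∂ν ≠ ∞) :
    Integrable f μ ∧ ∫ x, f x ∂μ ≤ ∫ y, g y ∂ν := by
  refine ⟨⟨hf, (hasFiniteIntegral_iff_ofReal hf₀).2 (hle.trans_lt hg_fin.lt_top)⟩, ?_⟩
  rw [integral_eq_lintegral_of_nonneg_ae hf₀ hf, integral_eq_lintegral_of_nonneg_ae hg₀ hg]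
  exact ENNReal.toReal_mono hg_fin hle

section StdGaussian

variable {E : Type*} [NormedAddCommGroup E] [InnerProductSpace ℝ E] [FiniteDimensional ℝ E]
  [MeasurableSpace E] [BorelSpace E]

lemma map_innerSL_stdGaussian (y : E) :
    (stdGaussian E).map (innerSL ℝ y) = gaussianReal 0 (‖y‖ ^ 2).toNNReal := by
  rw [IsGaussian.map_eq_gaussianReal, integral_strongDual_stdGaussian, variance_dual_stdGaussian,
    innerSL_apply_norm]

lemma integral_exp_inner_stdGaussian (y : E) :
    ∫ w, exp ⟪y, w⟫ ∂stdGaussian E = exp (‖y‖ ^ 2 / 2) := by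
  simpa [mgf] using mgf_gaussianReal (map_innerSL_stdGaussian y) 1

lemma integrable_exp_inner_stdGaussian (y : E) :
    Integrable (fun w ↦ exp ⟪y, w⟫) (stdGaussian E) := by
  have := integrable_exp_mul_gaussianReal (μ := 0) (v := (‖y‖ ^ 2).toNNReal) 1
  rw [← map_innerSL_stdGaussian, integrable_map_measure (by fun_prop) (by fun_prop)] at this
  simpa [Function.comp_def] using this

lemma integrable_exp_mul_norm_sq_stdGaussian {c : ℝ} (hc : c < 1) :
    Integrable (fun w ↦ exp (c * ‖w‖ ^ 2 / 2)) (stdGaussian E) := by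
  rw [stdGaussian, integrable_map_measure (by fun_prop) (Measurable.aemeasurable (by fun_prop))]
  have hnorm (x : Fin (Module.finrank ℝ E) → ℝ) :
      ‖∑ i, x i • stdOrthonormalBasis ℝ E i‖ ^ 2 = ∑ i, x i ^ 2 := by
    rw [(stdOrthonormalBasis ℝ E).sum_repr_symm (WithLp.toLp 2 x), LinearIsometryEquiv.norm_map,
      EuclideanSpace.real_norm_sq_eq]
  refine (Integrable.fintype_prod fun _ ↦ integrable_exp_mul_sq_gaussianReal hc).congr
    (ae_of_all _ fun x ↦ ?_)
  simp only [Function.comp_apply, hnorm, ← exp_sum, Finset.mul_sum, Finset.sum_div]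

lemma lintegral_exp_inner_stdGaussian (y : E) :
    ∫⁻ w, ENNReal.ofReal (exp ⟪y, w⟫) ∂stdGaussian E = ENNReal.ofReal (exp (‖y‖ ^ 2 / 2)) := by
  rw [← ofReal_integral_eq_lintegral_ofReal (integrable_exp_inner_stdGaussian y)
    (ae_of_all _ fun _ ↦ (exp_pos _).le), integral_exp_inner_stdGaussian]

lemma lintegral_exp_mul_norm_sq_eq_lintegral_stdGaussian {Ω : Type*} [MeasurableSpace Ω]
    {P : Measure Ω} [SFinite P] {Y : Ω → E} (hY : AEMeasurable Y P) {t : ℝ} (ht : 0 ≤ t) :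
    ∫⁻ ω, ENNReal.ofReal (exp (t * ‖Y ω‖ ^ 2 / 2)) ∂P =
      ∫⁻ w, ∫⁻ ω, ENNReal.ofReal (exp ⟪√t • w, Y ω⟫) ∂P ∂stdGaussian E := by
  have hpoint (y : E) : ENNReal.ofReal (exp (t * ‖y‖ ^ 2 / 2)) =
      ∫⁻ w, ENNReal.ofReal (exp ⟪√t • w, y⟫) ∂stdGaussian E := by
    have hinner (w : E) : ⟪√t • w, y⟫ = ⟪√t • y, w⟫ := by
      rw [real_inner_smul_left, real_inner_smul_left, real_inner_comm]
    simp_rw [hinner, lintegral_exp_inner_stdGaussian, norm_smul, mul_pow, Real.norm_eq_abs, sq_abs,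
      Real.sq_sqrt ht]
  simp_rw [hpoint]
  exact lintegral_lintegral_swap <|
    (ENNReal.measurable_ofReal.comp measurable_exp).comp_aemeasurable
      ((measurable_snd.const_smul _).aemeasurable.inner hY.comp_fst)

section ExponentialMomentBound

variable {Ω : Type*} [MeasurableSpace Ω] {P : Measure Ω} [SFinite P] {Y : Ω → E}
  {t : ℝ} {φ : E → ℝ}

lemma lintegral_exp_mul_norm_sq_le_of_integral_exp_inner_le (hY : AEMeasurable Y P) (ht : 0 ≤ t)
    (hφ : ∀ z, Integrable (fun ω ↦ exp ⟪z, Y ω⟫) P ∧ ∫ ω, exp ⟪z, Y ω⟫ ∂P ≤ φ z) :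
    ∫⁻ ω, ENNReal.ofReal (exp (t * ‖Y ω‖ ^ 2 / 2)) ∂P ≤
      ∫⁻ w, ENNReal.ofReal (φ (√t • w)) ∂stdGaussian E := by
  rw [lintegral_exp_mul_norm_sq_eq_lintegral_stdGaussian hY ht]
  refine lintegral_mono fun w ↦ ?_
  rw [← ofReal_integral_eq_lintegral_ofReal (hφ _).1 (ae_of_all _ fun _ ↦ (exp_pos _).le)]
  exact ENNReal.ofReal_le_ofReal (hφ _).2

lemma lintegral_exp_mul_norm_sq_eq_of_integral_exp_inner_eq (hY : AEMeasurable Y P) (ht : 0 ≤ t)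
    (hφ : ∀ z, Integrable (fun ω ↦ exp ⟪z, Y ω⟫) P ∧ ∫ ω, exp ⟪z, Y ω⟫ ∂P = φ z) :
    ∫⁻ ω, ENNReal.ofReal (exp (t * ‖Y ω‖ ^ 2 / 2)) ∂P =
      ∫⁻ w, ENNReal.ofReal (φ (√t • w)) ∂stdGaussian E := by
  rw [lintegral_exp_mul_norm_sq_eq_lintegral_stdGaussian hY ht]
  refine lintegral_congr fun w ↦ ?_
  rw [← ofReal_integral_eq_lintegral_ofReal (hφ _).1 (ae_of_all _ fun _ ↦ (exp_pos _).le),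
    (hφ _).2]

end ExponentialMomentBound

end StdGaussian

theorem stmt_2_general {n : ℕ}
    (Γ : Matrix (Fin n) (Fin n) ℝ)
    {Ω : Type*} [MeasurableSpace Ω] {P : Measure Ω} [IsProbabilityMeasure P]
    {Ω' : Type*} [MeasurableSpace Ω'] {P' : Measure Ω'} [IsProbabilityMeasure P']
    (X : Ω → EuclideanSpace ℝ (Fin n)) (Z : Ω' → EuclideanSpace ℝ (Fin n))
    (hXmeas : AEMeasurable X P) (hZmeas : AEMeasurable Z P')
    (hX : ∀ z : EuclideanSpace ℝ (Fin n),
      Integrable (fun ω => Real.exp ⟪z, X ω⟫) P ∧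
      ∫ ω, Real.exp ⟪z, X ω⟫ ∂P ≤ Real.exp (⟪(Matrix.toEuclideanCLM (𝕜 := ℝ) Γ) z, z⟫ / 2))
    (hZ : ∀ z : EuclideanSpace ℝ (Fin n),
      Integrable (fun ω => Real.exp ⟪z, Z ω⟫) P' ∧
      ∫ ω, Real.exp ⟪z, Z ω⟫ ∂P' = Real.exp (⟪(Matrix.toEuclideanCLM (𝕜 := ℝ) Γ) z, z⟫ / 2))
    (t : ℝ) (ht0 : 0 ≤ t) (ht : t * ‖Matrix.toEuclideanCLM (𝕜 := ℝ) Γ‖ < 1) :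
    Integrable (fun ω => Real.exp (t * ‖X ω‖ ^ 2 / 2)) P ∧
    ∫ ω, Real.exp (t * ‖X ω‖ ^ 2 / 2) ∂P ≤ ∫ ω, Real.exp (t * ‖Z ω‖ ^ 2 / 2) ∂P' := by
  set G := Matrix.toEuclideanCLM (𝕜 := ℝ) Γ
  have hquad (w : EuclideanSpace ℝ (Fin n)) :
      exp (⟪G (√t • w), √t • w⟫ / 2) ≤ exp (t * ‖G‖ * ‖w‖ ^ 2 / 2) := by
    rw [map_smul, real_inner_smul_left, real_inner_smul_right, ← mul_assoc, Real.mul_self_sqrt ht0,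
      mul_assoc]
    gcongr
    exact G.real_inner_map_self_le w
  have hfin : ∫⁻ w, ENNReal.ofReal (exp (⟪G (√t • w), √t • w⟫ / 2))
      ∂stdGaussian (EuclideanSpace ℝ (Fin n)) ≠ ∞ :=
    ne_top_of_le_ne_top (integrable_exp_mul_norm_sq_stdGaussian ht).lintegral_lt_top.ne
      (lintegral_mono fun w ↦ ENNReal.ofReal_le_ofReal (hquad w))
  have hZeq := lintegral_exp_mul_norm_sq_eq_of_integral_exp_inner_eq hZmeas ht0 hZ
  have hcont : Continuous fun x : EuclideanSpace ℝ (Fin n) ↦ exp (t * ‖x‖ ^ 2 / 2) := by fun_prop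
  exact integrable_and_integral_le_of_lintegral_ofReal_le
    (hcont.measurable.comp_aemeasurable hXmeas).aestronglyMeasurable
    (ae_of_all _ fun _ ↦ (exp_pos _).le)
    (hcont.measurable.comp_aemeasurable hZmeas).aestronglyMeasurable
    (ae_of_all _ fun _ ↦ (exp_pos _).le)
    ((lintegral_exp_mul_norm_sq_le_of_integral_exp_inner_le hXmeas ht0 hX).trans_eq hZeq.symm)
    (hZeq ▸ hfin)

/-- Let `X` be a mean-zero random vector in `ℝⁿ` with `E[exp(zᵀX)] ≤ exp(zᵀΓz/2)` for all
`z ∈ ℝⁿ` (`Γ` positive semidefinite), and let `Z ~ N(0, Γ)` (characterized by its mgf).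
Then for all `0 ≤ t < ‖Γ‖_op⁻¹`, `E[exp(t‖X‖²/2)] ≤ E[exp(t‖Z‖²/2)]`. -/
theorem stmt_2 {n : ℕ}
    (Γ : Matrix (Fin n) (Fin n) ℝ) (hΓ : Γ.PosSemidef)
    {Ω : Type*} [MeasurableSpace Ω] {P : Measure Ω} [IsProbabilityMeasure P]
    {Ω' : Type*} [MeasurableSpace Ω'] {P' : Measure Ω'} [IsProbabilityMeasure P']
    (X : Ω → EuclideanSpace ℝ (Fin n)) (Z : Ω' → EuclideanSpace ℝ (Fin n))
    (hXmeas : AEMeasurable X P) (hZmeas : AEMeasurable Z P')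
    (hXint : Integrable X P) (hXmean : ∫ ω, X ω ∂P = 0)
    (hX : ∀ z : EuclideanSpace ℝ (Fin n),
      Integrable (fun ω => Real.exp ⟪z, X ω⟫) P ∧
      ∫ ω, Real.exp ⟪z, X ω⟫ ∂P ≤ Real.exp (⟪(Matrix.toEuclideanCLM (𝕜 := ℝ) Γ) z, z⟫ / 2))
    (hZ : ∀ z : EuclideanSpace ℝ (Fin n),
      Integrable (fun ω => Real.exp ⟪z, Z ω⟫) P' ∧
      ∫ ω, Real.exp ⟪z, Z ω⟫ ∂P' = Real.exp (⟪(Matrix.toEuclideanCLM (𝕜 := ℝ) Γ) z, z⟫ / 2))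
    (t : ℝ) (ht0 : 0 ≤ t) (ht : t * ‖Matrix.toEuclideanCLM (𝕜 := ℝ) Γ‖ < 1) :
    Integrable (fun ω => Real.exp (t * ‖X ω‖ ^ 2 / 2)) P ∧
    ∫ ω, Real.exp (t * ‖X ω‖ ^ 2 / 2) ∂P ≤ ∫ ω, Real.exp (t * ‖Z ω‖ ^ 2 / 2) ∂P' :=
  stmt_2_general Γ X Z hXmeas hZmeas hX hZ t ht0 ht
end

section
/- Let Γ be a positive definite trace class operator on a real separable Hilbert space H and X a centered sub-gaussian random variable in H with respect to Γ. Then there is a universal constant C > 0 such that the ψ₁ (sub-exponential) norm of ‖X‖² satisfies ‖‖X‖²‖_{ψ₁} ≤ C‖X‖²_{ψ₂}‖Γ‖_tr; in particular, ‖X‖² is a real-valued sub-exponential random variable. -/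
/-!
Each coordinate `⟪b i, X⟫` is a real sub-Gaussian variable with variance proxy
`cᵢ = L² ⟪Γ bᵢ, bᵢ⟫`. For a real variable `Y` with proxy `c`, writing `exp (Y²/4c)` as a Gaussian
integral of `exp (s Y)` gives `E exp (Y²/4c) ≤ √2`. Convexity of `exp` with weights `cᵢ / ∑ cⱼ`
extends this to `E exp (∑_{i ∈ s} Yᵢ² / 4 ∑ cᵢ) ≤ √2` for every finite `s`, and monotone convergence
over the countable basis passes to `‖X‖² = ∑ Yᵢ²`, so `C = 4` works.
-/

open MeasureTheory ProbabilityTheory Real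
open scoped NNReal ENNReal RealInnerProductSpace

lemma mul_sub_mul_sq_eq_add_neg_mul_sq {v : ℝ} (hv : v ≠ 0) (y s : ℝ) :
    s * y - v * s ^ 2 = y ^ 2 / (4 * v) + -v * (s - y / (2 * v)) ^ 2 := by
  field_simp; ring

lemma integrable_exp_mul_sub_mul_sq {v : ℝ} (hv : 0 < v) (y : ℝ) :
    Integrable (fun s => exp (s * y - v * s ^ 2)) := by
  simp_rw [mul_sub_mul_sq_eq_add_neg_mul_sq hv.ne', exp_add]
  exact ((integrable_exp_neg_mul_sq hv).comp_sub_right _).const_mul _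

lemma exp_sq_div_eq_integral {v : ℝ} (hv : 0 < v) (y : ℝ) :
    exp (y ^ 2 / (4 * v)) = √(v / π) * ∫ s, exp (s * y - v * s ^ 2) := by
  simp_rw [mul_sub_mul_sq_eq_add_neg_mul_sq hv.ne', exp_add, integral_const_mul,
    integral_sub_right_eq_self (fun s => exp (-v * s ^ 2)), integral_gaussian]
  rw [mul_left_comm, ← sqrt_mul (by positivity), div_mul_div_cancel₀ pi_pos.ne',
    div_self hv.ne', sqrt_one, mul_one]

lemma ofReal_exp_sq_div_eq_lintegral {v : ℝ} (hv : 0 < v) (y : ℝ) :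
    ENNReal.ofReal (exp (y ^ 2 / (4 * v))) =
      ENNReal.ofReal √(v / π) * ∫⁻ s, ENNReal.ofReal (exp (s * y - v * s ^ 2)) := by
  rw [exp_sq_div_eq_integral hv, ENNReal.ofReal_mul (sqrt_nonneg _),
    ofReal_integral_eq_lintegral_ofReal (integrable_exp_mul_sub_mul_sq hv y)
      (.of_forall fun _ => (exp_pos _).le)]

namespace ProbabilityTheory.HasSubgaussianMGF

variable {Ω : Type*} [MeasurableSpace Ω] {μ : Measure Ω} {Y : Ω → ℝ} {c : ℝ≥0}

lemma lintegral_exp_mul_sub_le (h : HasSubgaussianMGF Y c μ) (s : ℝ) :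
    ∫⁻ ω, ENNReal.ofReal (exp (s * Y ω - c * s ^ 2)) ∂μ ≤
      ENNReal.ofReal (exp (-(c / 2) * s ^ 2)) := by
  simp_rw [sub_eq_add_neg, exp_add]
  rw [← ofReal_integral_eq_lintegral_ofReal ((h.integrable_exp_mul s).mul_const _)
    (.of_forall fun _ => by positivity), integral_mul_const]
  refine ENNReal.ofReal_le_ofReal ?_
  calc mgf Y μ s * exp (-(c * s ^ 2)) ≤ exp (c * s ^ 2 / 2) * exp (-(c * s ^ 2)) := by
        gcongr; exact h.mgf_le s
    _ = exp (-(c / 2) * s ^ 2) := by rw [← exp_add]; ring_nf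

lemma lintegral_exp_sq_div_le [SFinite μ] (h : HasSubgaussianMGF Y c μ) (hc : 0 < c) :
    ∫⁻ ω, ENNReal.ofReal (exp (Y ω ^ 2 / (4 * c))) ∂μ ≤ ENNReal.ofReal √2 := by
  have hc' : (0 : ℝ) < c := hc
  have hmeas : AEMeasurable (Function.uncurry fun ω (s : ℝ) =>
      ENNReal.ofReal (exp (s * Y ω - c * s ^ 2))) (μ.prod volume) := by
    have hY := h.aemeasurable.comp_quasiMeasurePreserving
      (Measure.quasiMeasurePreserving_fst (μ := μ) (ν := (volume : Measure ℝ)))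
    exact (ENNReal.measurable_ofReal.comp measurable_exp).comp_aemeasurable
      ((measurable_snd.aemeasurable.mul hY).sub (by fun_prop))
  calc ∫⁻ ω, ENNReal.ofReal (exp (Y ω ^ 2 / (4 * c))) ∂μ
      = ENNReal.ofReal √(c / π) *
          ∫⁻ s, ∫⁻ ω, ENNReal.ofReal (exp (s * Y ω - c * s ^ 2)) ∂μ := by
        simp_rw [ofReal_exp_sq_div_eq_lintegral hc']
        rw [lintegral_const_mul' _ _ ENNReal.ofReal_ne_top, lintegral_lintegral_swap hmeas]
    _ ≤ ENNReal.ofReal √(c / π) * ∫⁻ s, ENNReal.ofReal (exp (-(c / 2) * s ^ 2)) := by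
        gcongr with s
        exact h.lintegral_exp_mul_sub_le s
    _ = ENNReal.ofReal √2 := by
        rw [← ofReal_integral_eq_lintegral_ofReal (integrable_exp_neg_mul_sq (by positivity))
          (.of_forall fun _ => (exp_pos _).le), integral_gaussian,
          ← ENNReal.ofReal_mul (sqrt_nonneg _), ← sqrt_mul (by positivity)]
        congr 2
        field_simp

variable [IsProbabilityMeasure μ] {ι : Type*} {Y : ι → Ω → ℝ} {c : ι → ℝ≥0}

lemma lintegral_exp_sum_sq_div_le_of_pos {s : Finset ι} (hs : s.Nonempty)
    (h : ∀ i ∈ s, HasSubgaussianMGF (Y i) (c i) μ) (hc : ∀ i ∈ s, 0 < c i) :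
    ∫⁻ ω, ENNReal.ofReal (exp ((∑ i ∈ s, Y i ω ^ 2) / (4 * ∑ i ∈ s, (c i : ℝ)))) ∂μ ≤
      ENNReal.ofReal √2 := by
  set W := ∑ i ∈ s, (c i : ℝ)
  have hW : 0 < W := Finset.sum_pos (fun i hi => NNReal.coe_pos.2 (hc i hi)) hs
  have hweights : ∑ i ∈ s, (c i : ℝ) / W = 1 := by rw [← Finset.sum_div, div_self hW.ne']
  have hjensen : ∀ ω, exp ((∑ i ∈ s, Y i ω ^ 2) / (4 * W)) ≤
      ∑ i ∈ s, (c i : ℝ) / W * exp (Y i ω ^ 2 / (4 * c i)) := by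
    intro ω
    have hsplit : (∑ i ∈ s, Y i ω ^ 2) / (4 * W) =
        ∑ i ∈ s, (c i : ℝ) / W * (Y i ω ^ 2 / (4 * c i)) := by
      rw [Finset.sum_div]
      refine Finset.sum_congr rfl fun i hi => ?_
      have : (c i : ℝ) ≠ 0 := (NNReal.coe_pos.2 (hc i hi)).ne'
      field_simp
    rw [hsplit]
    exact convexOn_exp.map_sum_le (fun i _ => by positivity) hweights (fun _ _ => trivial)
  calc ∫⁻ ω, ENNReal.ofReal (exp ((∑ i ∈ s, Y i ω ^ 2) / (4 * W))) ∂μ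
      ≤ ∫⁻ ω, ∑ i ∈ s, ENNReal.ofReal ((c i : ℝ) / W) *
          ENNReal.ofReal (exp (Y i ω ^ 2 / (4 * c i))) ∂μ := by
        refine lintegral_mono fun ω => ?_
        refine (ENNReal.ofReal_le_ofReal (hjensen ω)).trans_eq ?_
        rw [ENNReal.ofReal_sum_of_nonneg fun i _ => by positivity]
        exact Finset.sum_congr rfl fun i _ => ENNReal.ofReal_mul (by positivity)
    _ = ∑ i ∈ s, ENNReal.ofReal ((c i : ℝ) / W) *
          ∫⁻ ω, ENNReal.ofReal (exp (Y i ω ^ 2 / (4 * c i))) ∂μ := by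
        rw [lintegral_finsetSum' _ fun i hi => ?_]
        · simp_rw [lintegral_const_mul' _ _ ENNReal.ofReal_ne_top]
        · have := (h i hi).aemeasurable
          fun_prop
    _ ≤ ∑ i ∈ s, ENNReal.ofReal ((c i : ℝ) / W) * ENNReal.ofReal √2 := by
        gcongr with i hi
        exact (h i hi).lintegral_exp_sq_div_le (hc i hi)
    _ = ENNReal.ofReal √2 := by
        rw [← Finset.sum_mul, ← ENNReal.ofReal_sum_of_nonneg (fun i _ => by positivity),
          hweights, ENNReal.ofReal_one, one_mul]

lemma lintegral_exp_sum_sq_div_le (s : Finset ι) (h : ∀ i ∈ s, HasSubgaussianMGF (Y i) (c i) μ)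
    {V : ℝ} (hV : ∑ i ∈ s, (c i : ℝ) ≤ V) :
    ∫⁻ ω, ENNReal.ofReal (exp ((∑ i ∈ s, Y i ω ^ 2) / (4 * V))) ∂μ ≤ ENNReal.ofReal √2 := by
  classical
  set t := s.filter (fun i => c i ≠ 0)
  have hvanish : ∀ᵐ ω ∂μ, ∑ i ∈ t, Y i ω ^ 2 = ∑ i ∈ s, Y i ω ^ 2 := by
    have : ∀ᵐ ω ∂μ, ∀ i ∈ s, c i = 0 → Y i ω = 0 := by
      refine (Filter.eventually_all_finset s).2 fun i hi => ?_
      by_cases hci : c i = 0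
      · have hzero := h i hi
        rw [hci] at hzero
        filter_upwards [hzero.ae_eq_zero_of_hasSubgaussianMGF_zero] with ω hω _ using hω
      · exact .of_forall fun _ hci' => absurd hci' hci
    filter_upwards [this] with ω hω
    refine Finset.sum_filter_of_ne fun i hi hY hci => hY ?_
    rw [hω i hi hci, sq, mul_zero]
  rcases t.eq_empty_or_nonempty with ht | ht
  · calc ∫⁻ ω, ENNReal.ofReal (exp ((∑ i ∈ s, Y i ω ^ 2) / (4 * V))) ∂μ = ∫⁻ _, 1 ∂μ := by
          refine lintegral_congr_ae ?_
          filter_upwards [hvanish] with ω hω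
          rw [← hω, ht, Finset.sum_empty, zero_div, exp_zero, ENNReal.ofReal_one]
      _ ≤ ENNReal.ofReal √2 := by simp [one_le_sqrt]
  have htV : ∑ i ∈ t, (c i : ℝ) ≤ V :=
    (Finset.sum_le_sum_of_subset_of_nonneg (Finset.filter_subset _ s) fun _ _ _ =>
      NNReal.coe_nonneg _).trans hV
  have hpos : ∀ i ∈ t, 0 < c i := fun i hi => pos_iff_ne_zero.2 (Finset.mem_filter.1 hi).2
  calc ∫⁻ ω, ENNReal.ofReal (exp ((∑ i ∈ s, Y i ω ^ 2) / (4 * V))) ∂μ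
      ≤ ∫⁻ ω, ENNReal.ofReal (exp ((∑ i ∈ t, Y i ω ^ 2) / (4 * ∑ i ∈ t, (c i : ℝ)))) ∂μ := by
        refine lintegral_mono_ae ?_
        filter_upwards [hvanish] with ω hω
        rw [← hω]
        have : 0 < ∑ i ∈ t, (c i : ℝ) :=
          Finset.sum_pos (fun i hi => NNReal.coe_pos.2 (hpos i hi)) ht
        gcongr
    _ ≤ ENNReal.ofReal √2 :=
        lintegral_exp_sum_sq_div_le_of_pos ht (fun i hi => h i (Finset.mem_filter.1 hi).1) hpos

end ProbabilityTheory.HasSubgaussianMGF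

lemma Orthonormal.countable {𝕜 E ι : Type*} [RCLike 𝕜] [NormedAddCommGroup E]
    [InnerProductSpace 𝕜 E] [TopologicalSpace.SeparableSpace E] {v : ι → E}
    (hv : Orthonormal 𝕜 v) : Countable ι := by
  refine Pairwise.countable_of_isOpen_disjoint (s := fun i => Metric.ball (v i) (1 / 2))
    (fun i j hij => Metric.ball_disjoint_ball ?_) (fun _ => Metric.isOpen_ball)
    (fun i => ⟨v i, Metric.mem_ball_self (by norm_num)⟩)
  have hdist : dist (v i) (v j) ^ 2 = 2 := by
    rw [dist_eq_norm, @norm_sub_sq 𝕜, hv.1 i, hv.1 j, hv.2 hij]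
    norm_num
  nlinarith [dist_nonneg (x := v i) (y := v j)]

lemma lintegral_le_of_hasSum {α ι : Type*} [MeasurableSpace α] {μ : Measure α} [Countable ι]
    {f : ι → α → ℝ} {F : α → ℝ} {g : ℝ → ℝ≥0∞} (hg : Monotone g) (hgc : Continuous g)
    (hf : ∀ i, AEMeasurable (f i) μ) (hf0 : ∀ i a, 0 ≤ f i a)
    (hF : ∀ a, HasSum (fun i => f i a) (F a)) {B : ℝ≥0∞}
    (hB : ∀ s : Finset ι, ∫⁻ a, g (∑ i ∈ s, f i a) ∂μ ≤ B) :
    ∫⁻ a, g (F a) ∂μ ≤ B := by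
  have hmono : ∀ a, Monotone fun s : Finset ι => g (∑ i ∈ s, f i a) := fun a _ _ hst =>
    hg (Finset.sum_le_sum_of_subset_of_nonneg hst fun i _ _ => hf0 i a)
  have hsup : ∀ a, g (F a) = ⨆ s : Finset ι, g (∑ i ∈ s, f i a) := fun a =>
    tendsto_nhds_unique ((hgc.tendsto _).comp (hF a)) (tendsto_atTop_iSup (hmono a))
  simp_rw [hsup]
  rw [lintegral_iSup_directed (f := fun s a => g (∑ i ∈ s, f i a))
    (fun s => hgc.measurable.comp_aemeasurable (Finset.aemeasurable_fun_sum s fun i _ => hf i))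
    (Monotone.directed_le fun _ _ hst a => hmono a hst)]
  exact iSup_le hB

lemma integrable_and_integral_le_of_lintegral_ofReal_le_s6 {α : Type*} [MeasurableSpace α]
    {μ : Measure α} {f : α → ℝ} (hf : AEMeasurable f μ) (hf0 : 0 ≤ᵐ[μ] f) {B : ℝ} (hB0 : 0 ≤ B)
    (hB : ∫⁻ a, ENNReal.ofReal (f a) ∂μ ≤ ENNReal.ofReal B) :
    Integrable f μ ∧ ∫ a, f a ∂μ ≤ B := by
  refine ⟨(lintegral_ofReal_ne_top_iff_integrable hf.aestronglyMeasurable hf0).1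
    (ne_top_of_le_ne_top ENNReal.ofReal_ne_top hB), ?_⟩
  rw [integral_eq_lintegral_of_nonneg_ae hf0 hf.aestronglyMeasurable]
  exact ENNReal.toReal_le_of_le_ofReal hB0 hB

lemma hasSubgaussianMGF_inner_of_mgf_le {H Ω : Type*} [NormedAddCommGroup H] [InnerProductSpace ℝ H]
    [MeasurableSpace Ω] {P : Measure Ω} {X : Ω → H} {Γ : H →L[ℝ] H} {L : ℝ}
    (hX : ∀ z : H, Integrable (fun ω => exp ⟪z, X ω⟫) P ∧
      ∫ ω, exp ⟪z, X ω⟫ ∂P ≤ exp (L ^ 2 * ⟪Γ z, z⟫ / 2)) (z : H) :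
    HasSubgaussianMGF (fun ω => ⟪z, X ω⟫) (L ^ 2 * ⟪Γ z, z⟫).toNNReal P := by
  have hsmul : ∀ t : ℝ, (fun ω => exp (t * ⟪z, X ω⟫)) = fun ω => exp ⟪t • z, X ω⟫ := fun t => by
    simp_rw [real_inner_smul_left]
  refine ⟨fun t => hsmul t ▸ (hX (t • z)).1, fun t => ?_⟩
  calc mgf (fun ω => ⟪z, X ω⟫) P t = ∫ ω, exp ⟪t • z, X ω⟫ ∂P := by rw [mgf, hsmul]
    _ ≤ exp (L ^ 2 * ⟪Γ (t • z), t • z⟫ / 2) := (hX (t • z)).2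
    _ = exp (L ^ 2 * ⟪Γ z, z⟫ * t ^ 2 / 2) := by
        rw [Γ.map_smul, real_inner_smul_left, real_inner_smul_right]
        ring_nf
    _ ≤ exp ((L ^ 2 * ⟪Γ z, z⟫).toNNReal * t ^ 2 / 2) := by
        gcongr
        exact Real.le_coe_toNNReal _

lemma HilbertBasis.hasSum_inner_sq {ι H : Type*} [NormedAddCommGroup H] [InnerProductSpace ℝ H]
    (b : HilbertBasis ι ℝ H) (x : H) : HasSum (fun i => ⟪b i, x⟫ ^ 2) (‖x‖ ^ 2) := by
  simpa [← real_inner_self_eq_norm_sq, real_inner_comm x, sq] using b.hasSum_inner_mul_inner x x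

/-- Let `Γ` be a positive definite trace class operator on a real separable Hilbert space `H`
and `X` a centered sub-gaussian random variable in `H` w.r.t. `Γ`. Then there is a universal
constant `C > 0` with `‖‖X‖²‖_{ψ₁} ≤ C ‖X‖²_{ψ₂} ‖Γ‖_tr`; the ψ₁-norm bound is expressed by
the standard Orlicz criterion `E[exp(‖X‖² / (C L² ‖Γ‖_tr))] ≤ 2`, so `‖X‖²` is
sub-exponential. -/
theorem stmt_6 :
    ∃ C : ℝ, 0 < C ∧
      ∀ (H : Type) (_ : NormedAddCommGroup H) (_ : InnerProductSpace ℝ H)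
        (_ : CompleteSpace H) (_ : TopologicalSpace.SeparableSpace H)
        (_ : MeasurableSpace H) (_ : BorelSpace H)
        (Ω : Type) (_ : MeasurableSpace Ω) (P : Measure Ω) (_ : IsProbabilityMeasure P)
        (Γ : H →L[ℝ] H) (_ : IsSelfAdjoint Γ) (_ : ∀ z : H, 0 ≤ ⟪Γ z, z⟫)
        (ι : Type) (b : HilbertBasis ι ℝ H)
        (_ : Summable (fun i => ⟪Γ (b i), b i⟫))
        (X : Ω → H) (_ : AEMeasurable X P)
        (L : ℝ) (_ : 0 < L)
        (_ : ∀ z : H, Integrable (fun ω => Real.exp ⟪z, X ω⟫) P ∧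
          ∫ ω, Real.exp ⟪z, X ω⟫ ∂P ≤ Real.exp (L ^ 2 * ⟪Γ z, z⟫ / 2)),
        Integrable (fun ω =>
          Real.exp (‖X ω‖ ^ 2 / (C * L ^ 2 * ∑' i, ⟪Γ (b i), b i⟫))) P ∧
        ∫ ω, Real.exp (‖X ω‖ ^ 2 / (C * L ^ 2 * ∑' i, ⟪Γ (b i), b i⟫)) ∂P ≤ 2 := by
  refine ⟨4, by norm_num, ?_⟩
  intro H _ _ _ _ _ _ Ω _ P _ Γ _ hΓ ι b htrace X hX L _ hsub
  set T := ∑' i, ⟪Γ (b i), b i⟫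
  have : Countable ι := b.orthonormal.countable
  have hT : 0 ≤ T := tsum_nonneg fun i => hΓ (b i)
  have hcoord i := hasSubgaussianMGF_inner_of_mgf_le hsub (b i)
  have hvar (s : Finset ι) : ∑ i ∈ s, ((L ^ 2 * ⟪Γ (b i), b i⟫).toNNReal : ℝ) ≤ L ^ 2 * T := by
    simp_rw [Real.coe_toNNReal _ (mul_nonneg (sq_nonneg L) (hΓ _)), ← Finset.mul_sum]
    gcongr
    exact htrace.sum_le_tsum s fun i _ => hΓ (b i)
  refine integrable_and_integral_le_of_lintegral_ofReal_le_s6 (by fun_prop)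
    (.of_forall fun _ => (exp_pos _).le) zero_le_two ?_
  calc ∫⁻ ω, ENNReal.ofReal (exp (‖X ω‖ ^ 2 / (4 * L ^ 2 * T))) ∂P ≤ ENNReal.ofReal √2 := by
        refine lintegral_le_of_hasSum (g := fun x => ENNReal.ofReal (exp (x / (4 * L ^ 2 * T))))
          (fun x y hxy => ENNReal.ofReal_le_ofReal (exp_le_exp.2 (by gcongr)))
          (ENNReal.continuous_ofReal.comp (by fun_prop)) (fun i => by fun_prop)
          (fun _ _ => sq_nonneg _)
          (fun ω => b.hasSum_inner_sq (X ω)) fun s => ?_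
        simpa only [mul_assoc] using
          HasSubgaussianMGF.lintegral_exp_sum_sq_div_le s (fun i _ => hcoord i) (hvar s)
    _ ≤ ENNReal.ofReal 2 := ENNReal.ofReal_le_ofReal (sqrt_le_iff.2 ⟨by norm_num, by norm_num⟩)
end

section
/- For any real numbers a₁,…,aₙ and b₁,…,bₙ ∈ [0,1], we have Σᵢ aᵢbᵢ ≤ Σ_{i=1}^{s} a_{(i)}, where a_{(1)} ≥ ⋯ ≥ a_{(n)} are the aᵢ arranged in decreasing order, s = Σᵢ bᵢ, and for s = r + f with r a non-negative integer and 0 ≤ f < 1, the generalized sum is Σ_{i=1}^{s} cᵢ := Σ_{i=1}^{r} cᵢ + f·c_{r+1}. -/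
/-!
After reindexing by `σ` the weights `a` decrease; let `r = ⌊s⌋`. For a threshold `t` below the
`r` largest values and above the others, `∑ᵢ (aᵢ - t) bᵢ ≤ ∑_{i ≤ r} (a₍ᵢ₎ - t)` holds termwise:
on the top `r` indices because `aᵢ - t ≥ 0` and `bᵢ ≤ 1`, on the rest because `aᵢ - t ≤ 0` and
`bᵢ ≥ 0`. Rearranged with `t = a₍ᵣ₊₁₎`, this is the claim.
-/

open Finset

theorem sum_mul_le_sum_add_mul_of_threshold {ι : Type*} [DecidableEq ι] {S T : Finset ι}
    (hST : S ⊆ T) {c d : ι → ℝ} {t : ℝ} (hS : ∀ i ∈ S, t ≤ c i) (hTS : ∀ i ∈ T \ S, c i ≤ t)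
    (hd : ∀ i ∈ T, d i ∈ Set.Icc (0 : ℝ) 1) :
    ∑ i ∈ T, c i * d i ≤ ∑ i ∈ S, c i + (∑ i ∈ T, d i - #S) * t := by
  have hout : ∑ i ∈ T \ S, (c i - t) * d i ≤ 0 :=
    sum_nonpos fun i hi =>
      mul_nonpos_of_nonpos_of_nonneg (sub_nonpos.2 (hTS i hi)) (hd i (sdiff_subset hi)).1
  have hin : ∑ i ∈ S, (c i - t) * d i ≤ ∑ i ∈ S, (c i - t) :=
    sum_le_sum fun i hi => mul_le_of_le_one_right (sub_nonneg.2 (hS i hi)) (hd i (hST hi)).2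
  have key : ∑ i ∈ T, (c i - t) * d i ≤ ∑ i ∈ S, (c i - t) := by
    rw [← sum_sdiff hST]
    linarith
  simp only [sub_mul, sum_sub_distrib, ← mul_sum, sum_const, nsmul_eq_mul] at key
  linarith

theorem sum_univ_eq_sum_range_perm {M : Type*} [AddCommMonoid M] {n : ℕ} (f : Fin n → M)
    (σ : Equiv.Perm (Fin n)) :
    ∑ i, f i = ∑ i ∈ range n, if h : i < n then f (σ ⟨i, h⟩) else 0 := by
  rw [← Equiv.sum_comp σ, ← Fin.sum_univ_eq_sum_range]
  simp

theorem sum_range_mul_le_sum_range_floor {n : ℕ} {c d : ℕ → ℝ}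
    (hc : AntitoneOn c (Set.Iio n)) (hd : ∀ i ∈ range n, d i ∈ Set.Icc (0 : ℝ) 1) :
    ∑ i ∈ range n, c i * d i ≤
      ∑ i ∈ range ⌊∑ i ∈ range n, d i⌋₊, c i +
        (∑ i ∈ range n, d i - ⌊∑ i ∈ range n, d i⌋₊) * c ⌊∑ i ∈ range n, d i⌋₊ := by
  set s := ∑ i ∈ range n, d i
  set r := ⌊s⌋₊
  have hsn : s ≤ n := by
    simpa using sum_le_sum fun i hi => (hd i hi).2
  have hrn : r ≤ n := Nat.floor_le_of_le hsn
  rcases hrn.lt_or_eq with hrn | hrn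
  · have := sum_mul_le_sum_add_mul_of_threshold (range_subset_range.2 hrn.le) (t := c r)
      (fun i hi => hc (mem_range.1 hi |>.trans hrn) hrn (mem_range.1 hi).le)
      (fun i hi => by
        simp only [mem_sdiff, mem_range, not_lt] at hi
        exact hc hrn hi.1 hi.2) hd
    rwa [card_range] at this
  · -- `s = r = n`, so the junk value `c n` gets coefficient `0`; any lower bound of `c` will do.
    have hsr : s = r :=
      le_antisymm (hrn ▸ hsn) (Nat.floor_le (sum_nonneg fun i hi => (hd i hi).1))
    have hs_sub : s - n = 0 := sub_eq_zero.2 (hrn ▸ hsr)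
    have := sum_mul_le_sum_add_mul_of_threshold (subset_refl (range n)) (t := c (n - 1))
      (fun i hi => hc (mem_range.1 hi) (Nat.sub_one_lt_of_lt (mem_range.1 hi))
        (Nat.le_sub_one_of_lt (mem_range.1 hi))) (by simp) hd
    rw [card_range, hs_sub, zero_mul] at this
    rwa [hsr, sub_self, zero_mul, hrn]

/-- Monotone rearrangement: for `a₁,…,aₙ ∈ ℝ` and `b₁,…,bₙ ∈ [0,1]`,
`Σᵢ aᵢ bᵢ ≤ Σ_{i=1}^{s} a_{(i)}` where `a_{(1)} ≥ ⋯ ≥ a_{(n)}` is the decreasing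
rearrangement of the `aᵢ` (given by the permutation `σ`), `s = Σᵢ bᵢ`, and for
`s = r + f` (`r = ⌊s⌋`, `0 ≤ f < 1`) the generalized sum is
`Σ_{i=1}^{r} a_{(i)} + f · a_{(r+1)}`. -/
theorem stmt_7 {n : ℕ} (a b : Fin n → ℝ)
    (hb : ∀ i, b i ∈ Set.Icc (0 : ℝ) 1)
    (σ : Equiv.Perm (Fin n))
    (hσ : ∀ i j : Fin n, i ≤ j → a (σ j) ≤ a (σ i)) :
    ∑ i, a i * b i ≤
      (∑ i ∈ Finset.range ⌊∑ i, b i⌋₊,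
          (if h : i < n then a (σ ⟨i, h⟩) else 0)) +
        ((∑ i, b i) - ⌊∑ i, b i⌋₊) *
          (if h : ⌊∑ i, b i⌋₊ < n then a (σ ⟨⌊∑ i, b i⌋₊, h⟩) else 0) := by
  set c : ℕ → ℝ := fun i => if h : i < n then a (σ ⟨i, h⟩) else 0
  set d : ℕ → ℝ := fun i => if h : i < n then b (σ ⟨i, h⟩) else 0
  have hc : AntitoneOn c (Set.Iio n) := fun i hi j hj hij => by
    simp only [c, dif_pos (show i < n from hi), dif_pos (show j < n from hj)]
    exact hσ _ _ hij
  have hd : ∀ i ∈ range n, d i ∈ Set.Icc (0 : ℝ) 1 := fun i hi => by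
    simp only [d, dif_pos (mem_range.1 hi), hb]
  have hcd : ∑ i, a i * b i = ∑ i ∈ range n, c i * d i := by
    rw [sum_univ_eq_sum_range_perm _ σ]
    refine sum_congr rfl fun i hi => ?_
    simp only [c, d, dif_pos (mem_range.1 hi)]
  rw [hcd, sum_univ_eq_sum_range_perm b σ]
  exact sum_range_mul_le_sum_range_floor hc hd
end

section
/- Let Yₙ follow the Gaussian mixture distribution Fₙ = (1−εₙ)N(0,1) + εₙN(0,aₙ²) with aₙ > 1 and εₙ = aₙ⁻⁴. Then Var(Yₙ) = 1 − aₙ⁻⁴ + aₙ⁻², and for every integer k ≥ 2, E|Yₙ² − E[Yₙ²]|ᵏ ≤ 4·k!·(2aₙ²)^{k−2}·c for a constant c independent of n and k. -/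
/-!
The mixture is centred, so its variance is its second moment `(1 - ε) + ε a² = 1 - a⁻⁴ + a⁻²`.
For the central moments, if `|m| ≤ 2v` then `|x² - m|ᵏ ≤ (x² + 2v)ᵏ`, and expanding binomially
against the Gaussian moments `E X^{2j} = (2v)ʲ Γ(j + 1/2) / √π ≤ j! (2v)ʲ` of `N(0, v)` gives
`E (X² + 2v)ᵏ ≤ k! (2v)ᵏ ∑ 1/i! ≤ e k! (2v)ᵏ`. In the mixture the `N(0, 1)` part contributes at
most `e k! 2ᵏ` and the `N(0, a²)` part `a⁻⁴ e k! (2a²)ᵏ = 4e k! (2a²)ᵏ⁻²`, so `c = 2e` works.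
-/

open MeasureTheory ProbabilityTheory
open scoped NNReal ENNReal Nat
open Real Finset

lemma Real.Gamma_nat_add_half_le (j : ℕ) : Gamma (j + 1 / 2) ≤ j ! * √π := by
  induction j with
  | zero => simp [-one_div, Gamma_one_half_eq]
  | succ n ih =>
    have hpos : 0 < Gamma (n + 1 / 2) := Gamma_pos_of_pos (by positivity)
    rw [Nat.cast_succ, add_right_comm, Gamma_add_one (by positivity), Nat.factorial_succ,
      Nat.cast_mul, Nat.cast_succ]
    calc (n + 1 / 2) * Gamma (n + 1 / 2) ≤ (n + 1) * (n ! * √π) := by gcongr; linarith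
      _ = (n + 1) * n ! * √π := by ring

lemma sum_range_choose_mul_factorial_le (k : ℕ) :
    ∑ j ∈ range (k + 1), (k.choose j * j ! : ℝ) ≤ exp 1 * k ! := by
  have hterm : ∀ j ∈ range (k + 1), (k.choose j * j ! : ℝ) = k ! * (1 ^ (k - j) / (k - j)!) := by
    intro j hj
    rw [← Nat.choose_mul_factorial_mul_factorial (Nat.lt_succ_iff.1 (mem_range.1 hj))]
    push_cast
    rw [one_pow]
    field_simp
  rw [sum_congr rfl hterm, ← mul_sum, mul_comm]
  gcongr
  calc ∑ j ∈ range (k + 1), (1 : ℝ) ^ (k - j) / (k - j)!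
      = ∑ i ∈ range (k + 1), (1 : ℝ) ^ i / i ! := by
        simpa using sum_range_reflect (fun i => (1 : ℝ) ^ i / i !) (k + 1)
    _ ≤ exp 1 := sum_le_exp_of_nonneg zero_le_one _

lemma abs_sq_sub_pow_le (x m : ℝ) (k : ℕ) : |x ^ 2 - m| ^ k ≤ (x ^ 2 + |m|) ^ k := by
  gcongr
  exact (abs_sub _ _).trans_eq (by rw [abs_sq])

lemma sq_add_pow_eq_sum (x w : ℝ) (k : ℕ) :
    (x ^ 2 + w) ^ k = ∑ j ∈ range (k + 1), x ^ (2 * j) * w ^ (k - j) * k.choose j := by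
  simp [add_pow, pow_mul]

lemma one_sub_inv_pow_four_mul_add_inv_pow_four_mul_le {a : ℝ} (ha : 1 ≤ a) (n : ℕ) :
    (1 - 1 / a ^ 4) * 2 ^ (n + 2) + 1 / a ^ 4 * (2 * a ^ 2) ^ (n + 2) ≤ 8 * (2 * a ^ 2) ^ n := by
  have ha₄ : 1 ≤ a ^ 4 := one_le_pow₀ ha
  have h₁ : (1 - 1 / a ^ 4) * 2 ^ (n + 2) ≤ 4 * (2 * a ^ 2) ^ n :=
    calc (1 - 1 / a ^ 4) * 2 ^ (n + 2) ≤ 4 * 2 ^ n := by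
          rw [pow_add]
          nlinarith [pow_pos (two_pos (α := ℝ)) n, one_div_pos.2 (by positivity : 0 < a ^ 4)]
      _ ≤ 4 * (2 * a ^ 2) ^ n := by gcongr; nlinarith
  have h₂ : 1 / a ^ 4 * (2 * a ^ 2) ^ (n + 2) = 4 * (2 * a ^ 2) ^ n := by
    field_simp; ring
  linarith

namespace ProbabilityTheory

lemma integrable_pow_gaussianReal (μ : ℝ) (v : ℝ≥0) (n : ℕ) :
    Integrable (fun x => x ^ n) (gaussianReal μ v) :=
  integrable_pow_of_integrable_exp_mul (X := id) one_ne_zero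
    (integrable_exp_mul_gaussianReal 1) (integrable_exp_mul_gaussianReal (-1)) n

lemma integral_pow_two_mul_gaussianReal {v : ℝ≥0} (hv : v ≠ 0) (j : ℕ) :
    ∫ x, x ^ (2 * j) ∂gaussianReal 0 v = (2 * v) ^ j * Gamma (j + 1 / 2) / √π := by
  have h2v : 0 < 2 * (v : ℝ) := by positivity
  set b : ℝ := (2 * v)⁻¹
  have hb : 0 < b := inv_pos.2 h2v
  have hpdf : ∀ x : ℝ, gaussianPDFReal 0 v x • x ^ (2 * j)
      = (√(2 * π * v))⁻¹ * (|x| ^ ((2 * j : ℕ) : ℝ) * exp (-b * |x| ^ (2 : ℝ))) := by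
    intro x
    simp only [gaussianPDFReal, sub_zero, smul_eq_mul, b, rpow_two, rpow_natCast, pow_mul,
      sq_abs]
    field_simp
  rw [integral_gaussianReal_eq_integral_smul hv, funext hpdf, integral_const_mul,
    integral_comp_abs (f := fun y => y ^ ((2 * j : ℕ) : ℝ) * exp (-b * y ^ (2 : ℝ))),
    integral_rpow_mul_exp_neg_mul_rpow two_pos (by linarith [(2 * j).cast_nonneg (α := ℝ)]) hb]
  have hexp : ((2 * j : ℕ) + 1 : ℝ) / 2 = j + 1 / 2 := by push_cast; ring
  have hb_pow : b ^ (-((2 * j : ℕ) + 1 : ℝ) / 2) = (2 * v) ^ j * √(2 * v) := by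
    rw [neg_div, hexp, inv_rpow h2v.le, ← rpow_neg h2v.le, neg_neg, rpow_add h2v, rpow_natCast,
      ← sqrt_eq_rpow]
  rw [hb_pow, hexp, show (2 : ℝ) * π * v = (2 * v) * π by ring, sqrt_mul h2v.le]
  field_simp

lemma integral_pow_two_mul_gaussianReal_le {v : ℝ≥0} (hv : v ≠ 0) (j : ℕ) :
    ∫ x, x ^ (2 * j) ∂gaussianReal 0 v ≤ j ! * (2 * v) ^ j := by
  rw [integral_pow_two_mul_gaussianReal hv, div_le_iff₀ (sqrt_pos.2 pi_pos)]
  calc (2 * v) ^ j * Gamma (j + 1 / 2) ≤ (2 * (v : ℝ)) ^ j * (j ! * √π) := by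
        gcongr; exact Gamma_nat_add_half_le j
    _ = j ! * (2 * v) ^ j * √π := by ring

lemma integrable_sq_add_pow_gaussianReal (v : ℝ≥0) (w : ℝ) (k : ℕ) :
    Integrable (fun x => (x ^ 2 + w) ^ k) (gaussianReal 0 v) := by
  simp_rw [sq_add_pow_eq_sum]
  exact integrable_finsetSum _ fun j _ =>
    ((integrable_pow_gaussianReal 0 v _).mul_const _).mul_const _

lemma integrable_abs_sq_sub_pow_gaussianReal (v : ℝ≥0) (m : ℝ) (k : ℕ) :
    Integrable (fun x => |x ^ 2 - m| ^ k) (gaussianReal 0 v) :=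
  (integrable_sq_add_pow_gaussianReal v |m| k).mono' (by fun_prop) (ae_of_all _ fun x => by
    rw [Real.norm_eq_abs, abs_pow, abs_abs]
    exact abs_sq_sub_pow_le x m k)

lemma integral_sq_add_pow_gaussianReal_le {v : ℝ≥0} (hv : v ≠ 0) (k : ℕ) :
    ∫ x, (x ^ 2 + 2 * v) ^ k ∂gaussianReal 0 v ≤ exp 1 * k ! * (2 * v) ^ k := by
  set w : ℝ := 2 * v
  have hint : ∀ j ∈ range (k + 1), Integrable
      (fun x => x ^ (2 * j) * w ^ (k - j) * k.choose j) (gaussianReal 0 v) :=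
    fun j _ => ((integrable_pow_gaussianReal 0 v _).mul_const _).mul_const _
  simp_rw [sq_add_pow_eq_sum, integral_finsetSum _ hint, integral_mul_const]
  calc ∑ j ∈ range (k + 1), (∫ x, x ^ (2 * j) ∂gaussianReal 0 v) * w ^ (k - j) * k.choose j
      ≤ ∑ j ∈ range (k + 1), j ! * w ^ j * w ^ (k - j) * k.choose j := by
        gcongr with j
        exact integral_pow_two_mul_gaussianReal_le hv j
    _ = (∑ j ∈ range (k + 1), (k.choose j * j ! : ℝ)) * w ^ k := by
        rw [sum_mul]
        refine sum_congr rfl fun j hj => ?_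
        rw [mul_assoc _ (w ^ j), ← pow_add,
          Nat.add_sub_cancel' (Nat.lt_succ_iff.1 (mem_range.1 hj))]
        ring
    _ ≤ exp 1 * k ! * w ^ k := by gcongr; exact sum_range_choose_mul_factorial_le k

lemma integral_abs_sq_sub_pow_gaussianReal_le {v : ℝ≥0} (hv : v ≠ 0) {m : ℝ} (hm : |m| ≤ 2 * v)
    (k : ℕ) : ∫ x, |x ^ 2 - m| ^ k ∂gaussianReal 0 v ≤ exp 1 * k ! * (2 * v) ^ k := by
  refine le_trans (integral_mono_of_nonneg (ae_of_all _ fun x => by positivity)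
    (integrable_sq_add_pow_gaussianReal v _ k) (ae_of_all _ fun x => ?_))
    (integral_sq_add_pow_gaussianReal_le hv k)
  exact (abs_sq_sub_pow_le x m k).trans (pow_le_pow_left₀ (by positivity) (by linarith) k)

lemma integral_sq_gaussianReal (v : ℝ≥0) : ∫ x, x ^ 2 ∂gaussianReal 0 v = v :=
  (variance_of_integral_eq_zero aemeasurable_id integral_id_gaussianReal).symm.trans
    variance_id_gaussianReal

lemma integral_ofReal_smul_add_ofReal_smul_measure {α E : Type*} [MeasurableSpace α]
    [NormedAddCommGroup E] [NormedSpace ℝ E] {μ ν : Measure α} {f : α → E} {p q : ℝ}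
    (hp : 0 ≤ p) (hq : 0 ≤ q) (hμ : Integrable f μ) (hν : Integrable f ν) :
    ∫ x, f x ∂(ENNReal.ofReal p • μ + ENNReal.ofReal q • ν)
      = p • ∫ x, f x ∂μ + q • ∫ x, f x ∂ν := by
  rw [integral_add_measure (hμ.smul_measure ENNReal.ofReal_ne_top)
    (hν.smul_measure ENNReal.ofReal_ne_top), integral_smul_measure, integral_smul_measure,
    ENNReal.toReal_ofReal hp, ENNReal.toReal_ofReal hq]

noncomputable def gaussianMixture (ε : ℝ) (s : ℝ≥0) : Measure ℝ :=
  ENNReal.ofReal (1 - ε) • gaussianReal 0 1 + ENNReal.ofReal ε • gaussianReal 0 s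

section GaussianMixture

variable {ε : ℝ} {s : ℝ≥0}

lemma integral_gaussianMixture (hε₀ : 0 ≤ ε) (hε₁ : ε ≤ 1) {f : ℝ → ℝ}
    (h₁ : Integrable f (gaussianReal 0 1)) (hs : Integrable f (gaussianReal 0 s)) :
    ∫ x, f x ∂gaussianMixture ε s
      = (1 - ε) * ∫ x, f x ∂gaussianReal 0 1 + ε * ∫ x, f x ∂gaussianReal 0 s :=
  integral_ofReal_smul_add_ofReal_smul_measure (sub_nonneg.2 hε₁) hε₀ h₁ hs

lemma integral_id_gaussianMixture (hε₀ : 0 ≤ ε) (hε₁ : ε ≤ 1) :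
    ∫ x, x ∂gaussianMixture ε s = 0 := by
  rw [integral_gaussianMixture hε₀ hε₁ (by simpa using integrable_pow_gaussianReal 0 1 1)
    (by simpa using integrable_pow_gaussianReal 0 s 1), integral_id_gaussianReal,
    integral_id_gaussianReal]
  ring

lemma integral_sq_gaussianMixture (hε₀ : 0 ≤ ε) (hε₁ : ε ≤ 1) :
    ∫ x, x ^ 2 ∂gaussianMixture ε s = 1 - ε + ε * s := by
  rw [integral_gaussianMixture hε₀ hε₁ (integrable_pow_gaussianReal 0 1 2)
    (integrable_pow_gaussianReal 0 s 2), integral_sq_gaussianReal, integral_sq_gaussianReal]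
  simp

lemma variance_id_gaussianMixture (hε₀ : 0 ≤ ε) (hε₁ : ε ≤ 1) :
    Var[id; gaussianMixture ε s] = 1 - ε + ε * s :=
  (variance_of_integral_eq_zero aemeasurable_id (integral_id_gaussianMixture hε₀ hε₁)).trans
    (integral_sq_gaussianMixture hε₀ hε₁)

lemma integral_abs_sq_sub_pow_gaussianMixture_le (hε₀ : 0 ≤ ε) (hε₁ : ε ≤ 1) (hs : 1 ≤ s)
    {m : ℝ} (hm : |m| ≤ 2) (k : ℕ) :
    ∫ x, |x ^ 2 - m| ^ k ∂gaussianMixture ε s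
      ≤ exp 1 * k ! * ((1 - ε) * 2 ^ k + ε * (2 * s) ^ k) := by
  have hs₀ : s ≠ 0 := (zero_lt_one.trans_le hs).ne'
  rw [integral_gaussianMixture hε₀ hε₁ (integrable_abs_sq_sub_pow_gaussianReal 1 m k)
    (integrable_abs_sq_sub_pow_gaussianReal s m k)]
  have h₁ := integral_abs_sq_sub_pow_gaussianReal_le one_ne_zero (by simpa using hm) k
  have h₂ := integral_abs_sq_sub_pow_gaussianReal_le hs₀
    (hm.trans (by norm_cast; linarith [hs] : (2 : ℝ) ≤ 2 * s)) k
  rw [NNReal.coe_one, mul_one] at h₁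
  calc (1 - ε) * ∫ x, |x ^ 2 - m| ^ k ∂gaussianReal 0 1
          + ε * ∫ x, |x ^ 2 - m| ^ k ∂gaussianReal 0 s
      ≤ (1 - ε) * (exp 1 * k ! * 2 ^ k) + ε * (exp 1 * k ! * (2 * s) ^ k) := by
        gcongr
    _ = exp 1 * k ! * ((1 - ε) * 2 ^ k + ε * (2 * s) ^ k) := by ring

end GaussianMixture

end ProbabilityTheory

/-- Let `Y ~ F = (1−ε)N(0,1) + εN(0,a²)` with `a > 1` and `ε = a⁻⁴`. Then
`Var(Y) = 1 − a⁻⁴ + a⁻²`, and for every integer `k ≥ 2`,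
`E|Y² − E[Y²]|ᵏ ≤ 4 · k! · (2a²)^{k−2} · c` for a constant `c` independent of `a` and `k`. -/
theorem stmt_12 :
    ∃ c : ℝ, 0 < c ∧
      ∀ a : ℝ, 1 < a →
        (ProbabilityTheory.variance id
            (ENNReal.ofReal (1 - 1 / a ^ 4) • gaussianReal 0 1 +
              ENNReal.ofReal (1 / a ^ 4) • gaussianReal 0 (Real.toNNReal (a ^ 2))) =
          1 - 1 / a ^ 4 + 1 / a ^ 2) ∧
        ∀ k : ℕ, 2 ≤ k →
          (∫ x, |x ^ 2 - ∫ y, y ^ 2 ∂(ENNReal.ofReal (1 - 1 / a ^ 4) • gaussianReal 0 1 +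
                  ENNReal.ofReal (1 / a ^ 4) • gaussianReal 0 (Real.toNNReal (a ^ 2)))| ^ k
              ∂(ENNReal.ofReal (1 - 1 / a ^ 4) • gaussianReal 0 1 +
                  ENNReal.ofReal (1 / a ^ 4) • gaussianReal 0 (Real.toNNReal (a ^ 2)))) ≤
            4 * (Nat.factorial k : ℝ) * (2 * a ^ 2) ^ (k - 2) * c := by
  refine ⟨2 * exp 1, by positivity, fun a ha => ?_⟩
  rw [← gaussianMixture.eq_1]
  have hε₀ : 0 ≤ 1 / a ^ 4 := by positivity
  have hε₁ : 1 / a ^ 4 ≤ 1 := div_le_one_of_le₀ (one_le_pow₀ ha.le) (by positivity)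
  have hs : ((a ^ 2).toNNReal : ℝ) = a ^ 2 := Real.coe_toNNReal _ (sq_nonneg a)
  have hm : 1 - 1 / a ^ 4 + 1 / a ^ 4 * ((a ^ 2).toNNReal : ℝ) = 1 - 1 / a ^ 4 + 1 / a ^ 2 := by
    rw [hs]; field_simp
  refine ⟨(variance_id_gaussianMixture hε₀ hε₁).trans hm, fun k hk => ?_⟩
  obtain ⟨n, rfl⟩ : ∃ n, k = n + 2 := ⟨k - 2, by omega⟩
  have hm_abs : |1 - 1 / a ^ 4 + 1 / a ^ 2| ≤ 2 := by
    have : 1 / a ^ 2 ≤ 1 := div_le_one_of_le₀ (one_le_pow₀ ha.le) (by positivity)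
    exact abs_le.2 ⟨by linarith [one_div_pos.2 (by positivity : 0 < a ^ 2)], by linarith⟩
  rw [integral_sq_gaussianMixture hε₀ hε₁, hm, Nat.add_sub_cancel]
  calc _ ≤ exp 1 * (n + 2)! * ((1 - 1 / a ^ 4) * 2 ^ (n + 2)
          + 1 / a ^ 4 * (2 * ((a ^ 2).toNNReal : ℝ)) ^ (n + 2)) :=
        integral_abs_sq_sub_pow_gaussianMixture_le hε₀ hε₁
          (Real.one_le_toNNReal.2 (one_le_pow₀ ha.le)) hm_abs _
    _ ≤ exp 1 * (n + 2)! * (8 * (2 * a ^ 2) ^ n) := by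
        rw [hs]; gcongr; exact one_sub_inv_pow_four_mul_add_inv_pow_four_mul_le ha.le n
    _ = 4 * (n + 2)! * (2 * a ^ 2) ^ n * (2 * exp 1) := by ring
end

section
/- Let Z* be the membership matrix of a partition G₁*,…,G_K* of {1,…,n} (Z*_{ij} = 1/n_k if i,j ∈ G_k*, else 0) and let Z belong to the SDP feasible set 𝒞 = {Zᵀ = Z, Z ⪰ 0, tr(Z) = K, Z𝟙ₙ = 𝟙ₙ, Z ≥ 0}. Then |Z* − Z*ZZ*|₁ = |Z* − Z*Z|₁ = 2·Σ_{k≠m} |Z_{G_k*G_m*}|₁, where |M|₁ denotes the sum of absolute values of all entries and Z_{G_k*G_m*} is the submatrix of Z with rows in G_k* and columns in G_m*. -/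
/-!
Let `Z*` average over clusters. For a doubly stochastic `N`, the rows of `Z*` and `Z* N` are
probability vectors; on the diagonal blocks `Z* N ≤ Z*` entrywise (a column of `N` sums to `1`
and every entry of a row of `Z*` is at most its diagonal entry), while off them `Z*` vanishes.
Hence each row of `Z* - Z* N` has ℓ¹ norm twice the off-block mass of that row of `Z* N`.
Taking `N = Z` and `N = Z Z*` reduces both norms to off-block sums, and multiplying by `Z*`
on either side leaves an off-block sum unchanged because `Z*` fixes every vector that is
constant on clusters.
-/

open Finset Matrix

theorem sum_abs_sub_eq_two_mul_sum_compl {ι : Type*} [Fintype ι] [DecidableEq ι]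
    (p q : ι → ℝ) (s : Finset ι) (hsum : ∑ j, p j = ∑ j, q j)
    (hle : ∀ j ∈ s, q j ≤ p j) (hge : ∀ j ∉ s, p j ≤ q j) :
    ∑ j, |p j - q j| = 2 * ∑ j ∈ sᶜ, (q j - p j) := by
  have hbalance : ∑ j ∈ s, (p j - q j) = ∑ j ∈ sᶜ, (q j - p j) := by
    have := sum_add_sum_compl s (fun j => p j - q j)
    simp only [sum_sub_distrib] at this ⊢
    linarith
  rw [← sum_add_sum_compl s, two_mul]
  congr 1
  · rw [hbalance.symm]
    exact sum_congr rfl fun j hj => abs_of_nonneg (sub_nonneg.2 (hle j hj))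
  · exact sum_congr rfl fun j hj => by
      rw [abs_sub_comm, abs_of_nonneg (sub_nonneg.2 (hge j (mem_compl.1 hj)))]

section Membership

variable {ι κ : Type*} [Fintype ι] [DecidableEq κ] (c : ι → κ)

noncomputable def membershipMatrix : Matrix ι ι ℝ :=
  of fun i j => if c i = c j then 1 / (#{l | c l = c i} : ℝ) else 0

theorem membershipMatrix_apply (i j : ι) :
    membershipMatrix c i j = if c i = c j then 1 / (#{l | c l = c i} : ℝ) else 0 :=
  rfl

def offBlockSum (M : Matrix ι ι ℝ) : ℝ :=
  ∑ i, ∑ j, if c i ≠ c j then M i j else 0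

theorem card_fiber_pos (i : ι) : 0 < #{l | c l = c i} :=
  card_pos.2 ⟨i, by simp⟩

theorem membershipMatrix_le (i j : ι) : membershipMatrix c i j ≤ membershipMatrix c i i := by
  rw [membershipMatrix_apply, membershipMatrix_apply, if_pos rfl]
  split_ifs
  · rfl
  · positivity

theorem membershipMatrix_mulVec_comp (w : κ → ℝ) :
    membershipMatrix c *ᵥ (w ∘ c) = w ∘ c := by
  ext i
  have hN : (#{l | c l = c i} : ℝ) ≠ 0 := by exact_mod_cast (card_fiber_pos c i).ne'
  simp only [mulVec, dotProduct, membershipMatrix_apply, ite_mul, zero_mul, sum_ite,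
    sum_const_zero, add_zero, Function.comp_apply]
  calc ∑ j with c i = c j, 1 / (#{l | c l = c i} : ℝ) * w (c j)
      = ∑ j with c j = c i, 1 / (#{l | c l = c i} : ℝ) * w (c i) :=
        sum_congr (by simp only [eq_comm]) fun j hj => by rw [(mem_filter.1 hj).2]
    _ = w (c i) := by rw [sum_const, nsmul_eq_mul]; field_simp

theorem membershipMatrix_transpose : (membershipMatrix c)ᵀ = membershipMatrix c := by
  ext i j
  by_cases h : c i = c j
  · simp [membershipMatrix_apply, h]
  · simp [membershipMatrix_apply, h, Ne.symm h]

theorem membershipMatrix_mem_doublyStochastic [DecidableEq ι] :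
    membershipMatrix c ∈ doublyStochastic ℝ ι := by
  have hrow : membershipMatrix c *ᵥ 1 = 1 := membershipMatrix_mulVec_comp c 1
  refine mem_doublyStochastic.2 ⟨fun i j => ?_, hrow, ?_⟩
  · rw [membershipMatrix_apply]
    split_ifs <;> positivity
  · rw [← membershipMatrix_transpose c, vecMul_transpose, hrow]

theorem membershipMatrix_mul_apply_le [DecidableEq ι] {N : Matrix ι ι ℝ}
    (hN : N ∈ doublyStochastic ℝ ι) {i j : ι} (h : c i = c j) :
    (membershipMatrix c * N) i j ≤ membershipMatrix c i j := by
  calc (membershipMatrix c * N) i j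
      ≤ ∑ l, membershipMatrix c i i * N l j :=
        sum_le_sum fun l _ => mul_le_mul_of_nonneg_right (membershipMatrix_le c i l)
          (nonneg_of_mem_doublyStochastic hN)
    _ = membershipMatrix c i j := by
        rw [← mul_sum, sum_col_of_mem_doublyStochastic hN, mul_one]
        simp [membershipMatrix_apply, h]

theorem sum_abs_membershipMatrix_sub_mul [DecidableEq ι] {N : Matrix ι ι ℝ}
    (hN : N ∈ doublyStochastic ℝ ι) :
    ∑ i, ∑ j, |(membershipMatrix c - membershipMatrix c * N) i j| =
      2 * offBlockSum c (membershipMatrix c * N) := by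
  have hZN := mul_mem (membershipMatrix_mem_doublyStochastic c) hN
  rw [offBlockSum, mul_sum]
  refine sum_congr rfl fun i _ => ?_
  simp only [Matrix.sub_apply]
  rw [← sum_filter, sum_abs_sub_eq_two_mul_sum_compl _ _ {j | c i = c j}
    ((sum_row_of_mem_doublyStochastic (membershipMatrix_mem_doublyStochastic c) i).trans
      (sum_row_of_mem_doublyStochastic hZN i).symm)
    (fun j hj => membershipMatrix_mul_apply_le c hN (mem_filter.1 hj).2)
    (fun j hj => ?_), compl_filter]
  · refine congrArg (2 * ·) (sum_congr rfl fun j hj => ?_)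
    rw [membershipMatrix_apply, if_neg (mem_filter.1 hj).2, sub_zero]
  · rw [membershipMatrix_apply, if_neg (by simpa using hj)]
    exact nonneg_of_mem_doublyStochastic hZN

theorem offBlockSum_eq_sum_mulVec (M : Matrix ι ι ℝ) :
    offBlockSum c M = ∑ i, (M *ᵥ ((fun k => if c i ≠ k then 1 else 0) ∘ c)) i := by
  simp [offBlockSum, mulVec, dotProduct]

theorem offBlockSum_mul_membershipMatrix (M : Matrix ι ι ℝ) :
    offBlockSum c (M * membershipMatrix c) = offBlockSum c M := by
  rw [offBlockSum_eq_sum_mulVec, offBlockSum_eq_sum_mulVec]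
  simp only [← mulVec_mulVec, membershipMatrix_mulVec_comp]

theorem offBlockSum_transpose (M : Matrix ι ι ℝ) : offBlockSum c Mᵀ = offBlockSum c M := by
  rw [offBlockSum, offBlockSum, sum_comm]
  simp only [transpose_apply, ne_comm]

theorem offBlockSum_membershipMatrix_mul (M : Matrix ι ι ℝ) :
    offBlockSum c (membershipMatrix c * M) = offBlockSum c M := by
  rw [← offBlockSum_transpose, transpose_mul, membershipMatrix_transpose,
    offBlockSum_mul_membershipMatrix, offBlockSum_transpose]

end Membership

theorem stmt_14_general {n K : ℕ} (c : Fin n → Fin K)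
    (Zstar : Matrix (Fin n) (Fin n) ℝ)
    (hZstar : ∀ i j, Zstar i j =
      if c i = c j then 1 / ((Finset.univ.filter fun l => c l = c i).card : ℝ) else 0)
    (Z : Matrix (Fin n) (Fin n) ℝ)
    (hsymm : Z.transpose = Z)
    (hrow : Z.mulVec (fun _ => (1 : ℝ)) = (fun _ => (1 : ℝ)))
    (hnonneg : ∀ i j, 0 ≤ Z i j) :
    (∑ i, ∑ j, |(Zstar - Zstar * Z * Zstar) i j|) =
      (∑ i, ∑ j, |(Zstar - Zstar * Z) i j|) ∧
    (∑ i, ∑ j, |(Zstar - Zstar * Z) i j|) =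
      2 * ∑ i, ∑ j, if c i ≠ c j then |Z i j| else 0 := by
  obtain rfl : Zstar = membershipMatrix c := Matrix.ext hZstar
  have hZ : Z ∈ doublyStochastic ℝ (Fin n) :=
    mem_doublyStochastic.2 ⟨hnonneg, hrow, by rw [← hsymm, vecMul_transpose]; exact hrow⟩
  have hZZstar := mul_mem hZ (membershipMatrix_mem_doublyStochastic c)
  have hoff : offBlockSum c Z = ∑ i, ∑ j, if c i ≠ c j then |Z i j| else 0 := by
    simp only [offBlockSum, abs_of_nonneg (hnonneg _ _)]
  rw [Matrix.mul_assoc, sum_abs_membershipMatrix_sub_mul c hZZstar,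
    sum_abs_membershipMatrix_sub_mul c hZ, offBlockSum_membershipMatrix_mul,
    offBlockSum_membershipMatrix_mul, offBlockSum_mul_membershipMatrix, hoff]
  exact ⟨rfl, rfl⟩

/-- For the membership matrix `Z*` of a partition of `{1,…,n}` (given by the surjective
cluster map `c`) and any `Z` in the K-means SDP feasible set
`𝒞 = {Zᵀ = Z, Z ⪰ 0, tr Z = K, Z𝟙 = 𝟙, Z ≥ 0}`, one has
`|Z* − Z*ZZ*|₁ = |Z* − Z*Z|₁ = 2 Σ_{k≠m} |Z_{G_k* G_m*}|₁`. -/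
theorem stmt_14 {n K : ℕ} (c : Fin n → Fin K) (hc : Function.Surjective c)
    (Zstar : Matrix (Fin n) (Fin n) ℝ)
    (hZstar : ∀ i j, Zstar i j =
      if c i = c j then 1 / ((Finset.univ.filter fun l => c l = c i).card : ℝ) else 0)
    (Z : Matrix (Fin n) (Fin n) ℝ)
    (hsymm : Z.transpose = Z) (hpsd : Z.PosSemidef) (htr : Z.trace = (K : ℝ))
    (hrow : Z.mulVec (fun _ => (1 : ℝ)) = (fun _ => (1 : ℝ)))
    (hnonneg : ∀ i j, 0 ≤ Z i j) :
    (∑ i, ∑ j, |(Zstar - Zstar * Z * Zstar) i j|) =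
      (∑ i, ∑ j, |(Zstar - Zstar * Z) i j|) ∧
    (∑ i, ∑ j, |(Zstar - Zstar * Z) i j|) =
      2 * ∑ i, ∑ j, if c i ≠ c j then |Z i j| else 0 :=
  stmt_14_general c Zstar hZstar Z hsymm hrow hnonneg
end

section
/- Suppose Ẑ is an n×n matrix with |Ẑ − Z*|₁ ≤ 1/(3n̲), where Z* is the membership matrix of a partition of {1,…,n} into K equal-size clusters each of size n̲ (Z*_{ij} = 1/n̲ if i,j in the same cluster, else 0). Then the greedy rounding algorithm that repeatedly picks the smallest unassigned index j and forms the cluster {i : Ẑ_{ji} ≥ Ẑ_{jj}/2} recovers exactly the true partition: it outputs K̂ = K clusters with Ĝ_k = G_k* for all k. -/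
/-!
Row `j` of `Z*` is `1/n̲` on the cluster of `j` and `0` elsewhere, and row `j` of `Ẑ` is within
`1/(3n̲)` of it in `ℓ¹`. The deviations at the two entries `j` and `i` of that row therefore add up
to at most `1/(3n̲)`, which puts `Ẑ_{ji}` above `Ẑ_{jj}/2` exactly when `i` lies in the cluster of
`j`. So every greedy step removes the true cluster of its pivot, whichever pivot it is. As the
clusters are contiguous blocks, after `k` steps the remaining indices are those `≥ k n̲`, whose
smallest element `k n̲` opens the next block.
-/

open Finset

theorem half_le_iff_of_sum_abs_sub_ite_le {ι : Type*} [Fintype ι] {v : ι → ℝ} {y : ℝ}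
    {p : ι → Prop} [DecidablePred p] {j : ι} (hy : 0 < y) (hpj : p j)
    (hdev : ∑ i, |v i - if p i then y else 0| ≤ y / 3) (i : ι) :
    v j / 2 ≤ v i ↔ p i := by
  have hdev_nonneg : ∀ i ∈ (univ : Finset ι), 0 ≤ |v i - if p i then y else 0| :=
    fun _ _ => abs_nonneg _
  have hj : |v j - y| ≤ y / 3 := by
    simpa [hpj] using (single_le_sum hdev_nonneg (mem_univ j)).trans hdev
  have hj' := abs_le.mp hj
  obtain rfl | hij := eq_or_ne i j
  · simp only [hpj, iff_true]
    linarith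
  have hpair := (add_le_sum hdev_nonneg (mem_univ j) (mem_univ i) hij.symm).trans hdev
  simp only [hpj, if_true] at hpair
  by_cases hpi : p i
  · simp only [hpi, if_true, iff_true] at hpair ⊢
    linarith [neg_abs_le (v i - y), le_abs_self (v j - y), abs_nonneg (v i - y)]
  · simp only [hpi, if_false, sub_zero, iff_false, not_le] at hpair ⊢
    linarith [le_abs_self (v i), neg_abs_le (v j - y), abs_nonneg (v j - y)]

theorem filter_half_diag_le_eq_filter_label_eq {ι κ : Type*} [Fintype ι] [DecidableEq κ]
    (c : ι → κ) {y : ℝ} (hy : 0 < y) (Zstar Zhat : Matrix ι ι ℝ)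
    (hZstar : ∀ i j, Zstar i j = if c i = c j then y else 0)
    (hclose : ∑ i, ∑ j, |Zhat i j - Zstar i j| ≤ y / 3) (j : ι) :
    univ.filter (fun i => Zhat j j / 2 ≤ Zhat j i) = univ.filter (fun i => c i = c j) := by
  have hrow : ∑ i, |Zhat j i - if c i = c j then y else 0| ≤ y / 3 := by
    have hZrow : ∀ i, Zstar j i = if c i = c j then y else 0 := fun i => by
      rw [hZstar]; exact if_congr eq_comm rfl rfl
    simp only [← hZrow]
    exact (single_le_sum (f := fun j => ∑ i, |Zhat j i - Zstar j i|)
      (fun _ _ => sum_nonneg fun _ _ => abs_nonneg _) (mem_univ j)).trans hclose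
  ext i
  simp only [mem_filter, mem_univ, true_and]
  exact half_le_iff_of_sum_abs_sub_ite_le (p := fun i => c i = c j) hy rfl hrow i

section GreedyRun

variable {n nb : ℕ}

theorem Fin.filter_le_nonempty {m : ℕ} (hm : m < n) :
    (univ.filter (fun i : Fin n => m ≤ i)).Nonempty :=
  ⟨⟨m, hm⟩, by simp⟩

theorem Fin.val_min'_eq_of_eq_filter_le {m : ℕ} (hm : m < n) {s : Finset (Fin n)}
    (hs : s = univ.filter (fun i : Fin n => m ≤ i)) (h : s.Nonempty) :
    (s.min' h : ℕ) = m := by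
  subst hs
  exact le_antisymm (min'_le _ (⟨m, hm⟩ : Fin n) (by simp)) (mem_filter.mp (min'_mem _ h)).2

theorem Fin.filter_le_sdiff_filter_div_eq (hnb : 0 < nb) (k : ℕ) :
    univ.filter (fun i : Fin n => k * nb ≤ i) \ univ.filter (fun i : Fin n => (i : ℕ) / nb = k)
      = univ.filter (fun i : Fin n => (k + 1) * nb ≤ i) := by
  ext i
  simp only [mem_sdiff, mem_filter, mem_univ, true_and, Nat.div_eq_iff hnb, add_one_mul]
  omega

variable {K Khat : ℕ} {R Ghat : ℕ → Finset (Fin n)}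

theorem greedy_cluster_eq_block (hn : n = K * nb) (hnb : 0 < nb)
    (hG : ∀ k, k < Khat → ∀ h : (R k).Nonempty,
      Ghat k = univ.filter (fun i : Fin n => (i : ℕ) / nb = ((R k).min' h : ℕ) / nb))
    {k : ℕ} (hkK : k < K) (hkKhat : k < Khat)
    (hRk : R k = univ.filter (fun i : Fin n => k * nb ≤ i)) :
    Ghat k = univ.filter (fun i : Fin n => (i : ℕ) / nb = k) := by
  have hlt : k * nb < n := hn ▸ Nat.mul_lt_mul_of_pos_right hkK hnb
  rw [hG k hkKhat (hRk ▸ Fin.filter_le_nonempty hlt), Fin.val_min'_eq_of_eq_filter_le hlt hRk,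
    Nat.mul_div_cancel _ hnb]

theorem greedy_remaining_eq (hn : n = K * nb) (hnb : 0 < nb)
    (hR0 : R 0 = univ) (hRsucc : ∀ k, R (k + 1) = R k \ Ghat k)
    (hG : ∀ k, k < Khat → ∀ h : (R k).Nonempty,
      Ghat k = univ.filter (fun i : Fin n => (i : ℕ) / nb = ((R k).min' h : ℕ) / nb))
    {k : ℕ} (hkK : k ≤ K) (hkKhat : k ≤ Khat) :
    R k = univ.filter (fun i : Fin n => k * nb ≤ i) := by
  induction k with
  | zero => simp [hR0]
  | succ k ih =>
    have hRk := ih (by omega) (by omega)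
    rw [hRsucc, greedy_cluster_eq_block hn hnb hG (by omega) (by omega) hRk, hRk,
      Fin.filter_le_sdiff_filter_div_eq hnb]

theorem greedy_recovers_blocks (hn : n = K * nb) (hnb : 0 < nb)
    (hR0 : R 0 = univ) (hRsucc : ∀ k, R (k + 1) = R k \ Ghat k)
    (hne : ∀ k, k < Khat → (R k).Nonempty)
    (hG : ∀ k, k < Khat → ∀ h : (R k).Nonempty,
      Ghat k = univ.filter (fun i : Fin n => (i : ℕ) / nb = ((R k).min' h : ℕ) / nb))
    (hstop : R Khat = ∅) :
    Khat = K ∧ ∀ k, k < K → Ghat k = univ.filter (fun i : Fin n => (i : ℕ) / nb = k) := by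
  have hremaining {k : ℕ} (hkK : k ≤ K) (hkKhat : k ≤ Khat) :=
    greedy_remaining_eq hn hnb hR0 hRsucc hG hkK hkKhat
  have hKhat : Khat = K := by
    rcases lt_trichotomy Khat K with hlt | heq | hgt
    · have hnonempty :=
        Fin.filter_le_nonempty (n := n) (hn ▸ Nat.mul_lt_mul_of_pos_right hlt hnb)
      rw [← hremaining hlt.le le_rfl, hstop] at hnonempty
      exact absurd hnonempty not_nonempty_empty
    · exact heq
    · obtain ⟨i, hi⟩ := hne K hgt
      rw [hremaining le_rfl hgt.le, mem_filter] at hi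
      omega
  subst hKhat
  exact ⟨rfl, fun k hk => greedy_cluster_eq_block hn hnb hG hk hk
    (hremaining hk.le hk.le)⟩

end GreedyRun

theorem stmt_18_general {K nb n : ℕ} (hnb : 0 < nb) (hn : n = K * nb)
    (Zstar Zhat : Matrix (Fin n) (Fin n) ℝ)
    (hZstar : ∀ i j, Zstar i j =
      if (i : ℕ) / nb = (j : ℕ) / nb then 1 / (nb : ℝ) else 0)
    (hclose : (∑ i, ∑ j, |Zhat i j - Zstar i j|) ≤ 1 / (3 * (nb : ℝ)))
    -- the run of the greedy rounding algorithm: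
    (Khat : ℕ) (Ghat : ℕ → Finset (Fin n)) (R : ℕ → Finset (Fin n))
    (hR0 : R 0 = Finset.univ)
    (hRsucc : ∀ k, R (k + 1) = R k \ Ghat k)
    (hne : ∀ k, k < Khat → (R k).Nonempty)
    (hG : ∀ k, k < Khat → ∀ h : (R k).Nonempty,
      Ghat k = Finset.univ.filter
        (fun i => Zhat ((R k).min' h) ((R k).min' h) / 2 ≤ Zhat ((R k).min' h) i))
    (hstop : R Khat = ∅) :
    Khat = K ∧
      ∀ k, k < K → Ghat k = Finset.univ.filter (fun i : Fin n => (i : ℕ) / nb = k) := by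
  have hthreshold (j : Fin n) :
      univ.filter (fun i => Zhat j j / 2 ≤ Zhat j i)
        = univ.filter (fun i : Fin n => (i : ℕ) / nb = (j : ℕ) / nb) :=
    filter_half_diag_le_eq_filter_label_eq (fun i : Fin n => (i : ℕ) / nb)
      (by positivity) Zstar Zhat hZstar (by convert hclose using 1; ring) j
  exact greedy_recovers_blocks hn hnb hR0 hRsucc hne
    (fun k hk h => (hG k hk h).trans (hthreshold _)) hstop

/-- Suppose `Ẑ` satisfies `|Ẑ − Z*|₁ ≤ 1/(3n̲)`, where `Z*` is the membership matrix of the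
partition of `{1,…,n}` (`n = K n̲`) into `K` contiguous equal-size clusters
`G_k* = {(k−1)n̲+1, …, k n̲}` of size `n̲`. Then the greedy rounding algorithm (repeatedly
pick the smallest unassigned index `j` and form the cluster `{i : Ẑ_{ji} ≥ Ẑ_{jj}/2}`)
recovers the true partition exactly: it stops with `K̂ = K` and `Ĝ_k = G_k*` for all `k`. -/
theorem stmt_18 {K nb n : ℕ} (hnb : 0 < nb) (hK : 0 < K) (hn : n = K * nb)
    (Zstar Zhat : Matrix (Fin n) (Fin n) ℝ)
    (hZstar : ∀ i j, Zstar i j =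
      if (i : ℕ) / nb = (j : ℕ) / nb then 1 / (nb : ℝ) else 0)
    (hclose : (∑ i, ∑ j, |Zhat i j - Zstar i j|) ≤ 1 / (3 * (nb : ℝ)))
    -- the run of the greedy rounding algorithm:
    (Khat : ℕ) (Ghat : ℕ → Finset (Fin n)) (R : ℕ → Finset (Fin n))
    (hR0 : R 0 = Finset.univ)
    (hRsucc : ∀ k, R (k + 1) = R k \ Ghat k)
    (hne : ∀ k, k < Khat → (R k).Nonempty)
    (hG : ∀ k, k < Khat → ∀ h : (R k).Nonempty,
      Ghat k = Finset.univ.filter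
        (fun i => Zhat ((R k).min' h) ((R k).min' h) / 2 ≤ Zhat ((R k).min' h) i))
    (hstop : R Khat = ∅) :
    Khat = K ∧
      ∀ k, k < K → Ghat k = Finset.univ.filter (fun i : Fin n => (i : ℕ) / nb = k) :=
  stmt_18_general hnb hn Zstar Zhat hZstar hclose Khat Ghat R hR0 hRsucc hne hG hstop
end
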